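/- arXiv:1602.07720 — 6 statements merged into one kernel-verified Lean document; each statement's English description precedes it below -/
import Mathlib

section
/- For every bid vector b and every reserve vector r, the lazy revenue is at most the maximum of the eager revenue with reserves r and the eager revenue with all-zero reserves: RevL(b, r) ≤ max(RevE(b, r), RevE(b, 0)). Consequently RevL(b, r) ≤ RevE(b, r) + RevE(b, 0). -/
open MeasureTheory Finset
open scoped Classical ENNReal

noncomputable def lazyWinner {n : ℕ} (b : Fin (n + 1) → ℝ) : Fin (n + 1) :=
  (Finset.univ.filter fun i => ∀ j, b j ≤ b i).min' (by
    obtain ⟨i, -, hi⟩ := Finset.exists_max_image Finset.univ b ⟨0, Finset.mem_univ 0⟩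
    exact ⟨i, Finset.mem_filter.mpr ⟨Finset.mem_univ i, fun j => hi j (Finset.mem_univ j)⟩⟩)

noncomputable def secondMax {n : ℕ} (b : Fin (n + 1) → ℝ) : ℝ :=
  (Finset.univ.erase (lazyWinner b)).fold max 0 b

/-- Revenue of the second price auction with lazy reserves. -/
noncomputable def lazyRev {n : ℕ} (b r : Fin (n + 1) → ℝ) : ℝ :=
  if r (lazyWinner b) ≤ b (lazyWinner b) then max (r (lazyWinner b)) (secondMax b) else 0

/-- The least-index bidder among those meeting their reserve attaining the highest bid. -/
noncomputable def eagerWinner {n : ℕ} (b r : Fin (n + 1) → ℝ)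
    (hS : (Finset.univ.filter fun i => r i ≤ b i).Nonempty) : Fin (n + 1) :=
  ((Finset.univ.filter fun i => r i ≤ b i).filter
      fun i => ∀ k ∈ Finset.univ.filter (fun i => r i ≤ b i), b k ≤ b i).min' (by
    obtain ⟨i, hi, hmax⟩ := Finset.exists_max_image _ b hS
    exact ⟨i, Finset.mem_filter.mpr ⟨hi, hmax⟩⟩)

/-- Revenue of the second price auction with eager reserves. -/
noncomputable def eagerRev {n : ℕ} (b r : Fin (n + 1) → ℝ) : ℝ :=
  if hS : (Finset.univ.filter fun i => r i ≤ b i).Nonempty then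
    max (r (eagerWinner b r hS))
      (((Finset.univ.filter fun i => r i ≤ b i).erase (eagerWinner b r hS)).fold max 0 b)
  else 0

/-!
When the lazy winner `w` (the overall highest bidder) meets its reserve, it is also the eager
winner, so the lazy price `max (r w) B₂` is bounded by the eager revenue through `r w` and by the
zero-reserve eager revenue, which is the plain second price `B₂`, through `B₂`. Otherwise the
lazy revenue is `0`, and all revenues are nonnegative.
-/

section Auction

variable {n : ℕ} (b r : Fin (n + 1) → ℝ)

theorem le_lazyWinner (j : Fin (n + 1)) : b j ≤ b (lazyWinner b) := by
  have hmem : lazyWinner b ∈ univ.filter fun i => ∀ j, b j ≤ b i := by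
    unfold lazyWinner; exact min'_mem _ _
  exact (mem_filter.mp hmem).2 j

theorem eagerWinner_eq_lazyWinner (hS : (univ.filter fun i => r i ≤ b i).Nonempty)
    (hw : r (lazyWinner b) ≤ b (lazyWinner b)) : eagerWinner b r hS = lazyWinner b := by
  have hwS : lazyWinner b ∈ univ.filter fun i => r i ≤ b i := mem_filter.mpr ⟨mem_univ _, hw⟩
  have hmem : eagerWinner b r hS ∈ (univ.filter fun i => r i ≤ b i).filter
      fun i => ∀ k ∈ univ.filter (fun i => r i ≤ b i), b k ≤ b i := by
    unfold eagerWinner; exact min'_mem _ _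
  apply le_antisymm
  · exact min'_le _ _ (mem_filter.mpr ⟨hwS, fun k _ => le_lazyWinner b k⟩)
  · refine min'_le _ _ (mem_filter.mpr ⟨mem_univ _, fun j => ?_⟩)
    exact (le_lazyWinner b j).trans ((mem_filter.mp hmem).2 _ hwS)

theorem secondMax_nonneg : 0 ≤ secondMax b :=
  (le_fold_max 0).mpr (Or.inl le_rfl)

theorem eagerRev_nonneg (hr : ∀ i, 0 ≤ r i) : 0 ≤ eagerRev b r := by
  unfold eagerRev
  split
  · exact (hr _).trans (le_max_left _ _)
  · exact le_rfl

theorem eagerRev_zero (hb : ∀ i, 0 ≤ b i) : eagerRev b 0 = secondMax b := by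
  have hS : (univ.filter fun i => (0 : Fin (n + 1) → ℝ) i ≤ b i) = univ :=
    filter_true_of_mem fun i _ => hb i
  have hS' : (univ.filter fun i => (0 : Fin (n + 1) → ℝ) i ≤ b i).Nonempty := by
    rw [hS]; exact univ_nonempty
  rw [eagerRev, dif_pos hS', eagerWinner_eq_lazyWinner b 0 hS' (hb _), hS, Pi.zero_apply]
  exact max_eq_right (secondMax_nonneg b)

theorem lazyRev_le_max_eagerRev (hb : ∀ i, 0 ≤ b i) :
    lazyRev b r ≤ max (eagerRev b r) (eagerRev b 0) := by
  rw [lazyRev, eagerRev_zero b hb]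
  split
  case isFalse => exact (secondMax_nonneg b).trans (le_max_right _ _)
  case isTrue hw =>
    have hS : (univ.filter fun i => r i ≤ b i).Nonempty := ⟨_, mem_filter.mpr ⟨mem_univ _, hw⟩⟩
    have hreserve : r (lazyWinner b) ≤ eagerRev b r := by
      rw [eagerRev, dif_pos hS, eagerWinner_eq_lazyWinner b r hS hw]
      exact le_max_left _ _
    exact max_le_max_right _ hreserve

end Auction

theorem lazy_le_max_eager {n : ℕ} (b r : Fin (n + 1) → ℝ)
    (hb : ∀ i, 0 ≤ b i) (hr : ∀ i, 0 ≤ r i) :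
    lazyRev b r ≤ max (eagerRev b r) (eagerRev b 0) ∧
    lazyRev b r ≤ eagerRev b r + eagerRev b 0 := by
  have hmax := lazyRev_le_max_eagerRev b r hb
  refine ⟨hmax, hmax.trans (max_le ?_ ?_)⟩
  · exact le_add_of_nonneg_right (eagerRev_nonneg b 0 fun _ => le_rfl)
  · exact le_add_of_nonneg_left (eagerRev_nonneg b r hr)
end

section
/- For every bid vector b and every reserve vector r, the eager revenue is at most the maximum of the lazy revenue with reserves r and the lazy revenue with all-zero reserves: RevE(b, r) ≤ max(RevL(b, r), RevL(b, 0)). Consequently RevE(b, r) ≤ RevL(b, r) + RevL(b, 0). -/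
open MeasureTheory Finset
open scoped Classical ENNReal

lemma fold_max_nonneg {n : ℕ} (b : Fin (n + 1) → ℝ) (s : Finset (Fin (n + 1))) :
    0 ≤ s.fold max 0 b := (Finset.le_fold_max _).mpr (Or.inl le_rfl)

lemma fold_max_mono {n : ℕ} (b : Fin (n + 1) → ℝ) {s t : Finset (Fin (n + 1))}
    (h : s ⊆ t) : s.fold max 0 b ≤ t.fold max 0 b := by
  rw [Finset.fold_max_le]
  exact ⟨fold_max_nonneg b t, fun x hx => (Finset.le_fold_max _).mpr (Or.inr ⟨x, h hx, le_rfl⟩)⟩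

lemma lazyRev_nonneg {n : ℕ} (b r : Fin (n + 1) → ℝ) : 0 ≤ lazyRev b r := by
  unfold lazyRev
  split
  · exact le_trans (fold_max_nonneg b _) (le_max_right _ _)
  · exact le_rfl

theorem eager_le_max_lazy {n : ℕ} (b r : Fin (n + 1) → ℝ)
    (hb : ∀ i, 0 ≤ b i) (hr : ∀ i, 0 ≤ r i) :
    eagerRev b r ≤ max (lazyRev b r) (lazyRev b 0) ∧
    eagerRev b r ≤ lazyRev b r + lazyRev b 0 := by
  have key : eagerRev b r ≤ max (lazyRev b r) (lazyRev b 0) := by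
    by_cases hS : (Finset.univ.filter fun i => r i ≤ b i).Nonempty
    · set w := lazyWinner b with hwdef
      have hw : w ∈ Finset.univ.filter fun i => ∀ j, b j ≤ b i := Finset.min'_mem _ _
      have hwmax : ∀ j, b j ≤ b w := (Finset.mem_filter.mp hw).2
      set j := eagerWinner b r hS with hjdef
      have hj : j ∈ (Finset.univ.filter fun i => r i ≤ b i).filter
          fun i => ∀ k ∈ Finset.univ.filter (fun i => r i ≤ b i), b k ≤ b i :=
        Finset.min'_mem _ _
      have hjS : j ∈ Finset.univ.filter fun i => r i ≤ b i := (Finset.mem_filter.mp hj).1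
      have hjr : r j ≤ b j := (Finset.mem_filter.mp hjS).2
      have hjmax : ∀ k ∈ Finset.univ.filter (fun i => r i ≤ b i), b k ≤ b j :=
        (Finset.mem_filter.mp hj).2
      have heq : eagerRev b r = max (r j)
          (((Finset.univ.filter fun i => r i ≤ b i).erase j).fold max 0 b) := by
        rw [eagerRev, dif_pos hS]
      by_cases hwr : r w ≤ b w
      · -- w meets its reserve; then j = w
        have hwS : w ∈ Finset.univ.filter fun i => r i ≤ b i :=
          Finset.mem_filter.mpr ⟨Finset.mem_univ w, hwr⟩
        have hbjw : b j = b w := le_antisymm (hwmax j) (hjmax w hwS)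
        have hjw : j = w := by
          have h1 : w ≤ j := Finset.min'_le _ j
            (Finset.mem_filter.mpr ⟨Finset.mem_univ j, fun k => hbjw ▸ hwmax k⟩)
          have h2 : j ≤ w := Finset.min'_le _ w
            (Finset.mem_filter.mpr ⟨hwS, fun k hk => hwmax k⟩)
          exact le_antisymm h2 h1
        have hsub : (Finset.univ.filter fun i => r i ≤ b i).erase w ⊆
            Finset.univ.erase (lazyWinner b) := by
          intro x hx
          rw [Finset.mem_erase] at hx ⊢
          exact ⟨hx.1, Finset.mem_univ x⟩
        have : eagerRev b r ≤ lazyRev b r := by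
          rw [heq, lazyRev, if_pos hwr, hjw]
          exact max_le (le_max_left _ _)
            (le_trans (fold_max_mono b hsub) (le_max_right _ _))
        exact le_trans this (le_max_left _ _)
      · -- w does not meet its reserve
        have hwS : w ∉ Finset.univ.filter fun i => r i ≤ b i := by
          simp only [Finset.mem_filter, Finset.mem_univ, true_and]
          exact hwr
        have hjne : j ≠ w := fun h => hwS (h ▸ hjS)
        have hsubS : (Finset.univ.filter fun i => r i ≤ b i) ⊆ Finset.univ.erase w := by
          intro x hx
          exact Finset.mem_erase.mpr ⟨fun h => hwS (h ▸ hx), Finset.mem_univ x⟩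
        have hbj : b j ≤ secondMax b :=
          (Finset.le_fold_max _).mpr (Or.inr ⟨j, hsubS hjS, le_rfl⟩)
        have : eagerRev b r ≤ lazyRev b 0 := by
          rw [heq, lazyRev]
          simp only [Pi.zero_apply]
          rw [if_pos (hb _)]
          refine max_le ?_ ?_
          · exact le_trans (le_trans hjr hbj) (le_max_right _ _)
          · exact le_trans (fold_max_mono b
              (subset_trans (Finset.erase_subset _ _) hsubS)) (le_max_right _ _)
        exact le_trans this (le_max_right _ _)
    · rw [eagerRev, dif_neg hS]
      exact le_trans (lazyRev_nonneg b r) (le_max_left _ _)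
  refine ⟨key, le_trans key (max_le ?_ ?_)⟩
  · exact le_add_of_nonneg_right (lazyRev_nonneg b 0)
  · exact le_add_of_nonneg_left (lazyRev_nonneg b r)
end

section
/- The eager auction always attains at least the welfare of the lazy auction: for every bid vector b and reserve vector r, WE(b, r) ≥ WL(b, r). In particular, whenever the lazy auction allocates the item (b w ≥ r w), the eager auction also allocates the item. -/
open MeasureTheory Finset
open scoped Classical ENNReal

/-- Welfare of the second price auction with lazy reserves. -/
noncomputable def lazyWelfare {n : ℕ} (b r : Fin (n + 1) → ℝ) : ℝ :=
  if r (lazyWinner b) ≤ b (lazyWinner b) then b (lazyWinner b) else 0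

/-- Welfare of the second price auction with eager reserves. -/
noncomputable def eagerWelfare {n : ℕ} (b r : Fin (n + 1) → ℝ) : ℝ :=
  if hS : (Finset.univ.filter fun i => r i ≤ b i).Nonempty then b (eagerWinner b r hS) else 0

theorem eager_welfare_ge_lazy_welfare {n : ℕ} (b r : Fin (n + 1) → ℝ)
    (hb : ∀ i, 0 ≤ b i) (hr : ∀ i, 0 ≤ r i) :
    lazyWelfare b r ≤ eagerWelfare b r ∧
    (r (lazyWinner b) ≤ b (lazyWinner b) →
      (Finset.univ.filter fun i => r i ≤ b i).Nonempty) := by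
  have hSne : r (lazyWinner b) ≤ b (lazyWinner b) →
      (Finset.univ.filter fun i => r i ≤ b i).Nonempty := fun h =>
    ⟨lazyWinner b, Finset.mem_filter.mpr ⟨Finset.mem_univ _, h⟩⟩
  refine ⟨?_, hSne⟩
  unfold lazyWelfare eagerWelfare
  by_cases h : r (lazyWinner b) ≤ b (lazyWinner b)
  · have hS := hSne h
    rw [if_pos h, dif_pos hS]
    have hne : ((Finset.univ.filter fun i => r i ≤ b i).filter
        fun i => ∀ k ∈ Finset.univ.filter (fun i => r i ≤ b i), b k ≤ b i).Nonempty := by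
      obtain ⟨i, hi, hmax⟩ := Finset.exists_max_image _ b hS
      exact ⟨i, Finset.mem_filter.mpr ⟨hi, hmax⟩⟩
    have hmem : eagerWinner b r hS ∈ (Finset.univ.filter fun i => r i ≤ b i).filter
        fun i => ∀ k ∈ Finset.univ.filter (fun i => r i ≤ b i), b k ≤ b i :=
      Finset.min'_mem _ hne
    rw [Finset.mem_filter] at hmem
    exact hmem.2 (lazyWinner b) (Finset.mem_filter.mpr ⟨Finset.mem_univ _, h⟩)
  · rw [if_neg h]
    split_ifs with hS
    · exact hb _
    · exact le_refl 0
end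

section
/- If a bid vector b has no bid strictly between 0 and its reserve, i.e., for every bidder i either b i = 0 or b i ≥ r i, then the eager and lazy revenues coincide: RevE(b, r) = RevL(b, r). -/
open MeasureTheory Finset
open scoped Classical ENNReal

theorem eager_eq_lazy_of_trimmed_bids {n : ℕ} (b r : Fin (n + 1) → ℝ)
    (hb : ∀ i, 0 ≤ b i) (hr : ∀ i, 0 ≤ r i)
    (htrim : ∀ i, b i = 0 ∨ r i ≤ b i) :
    eagerRev b r = lazyRev b r := by

  classical
  set w := lazyWinner b with hw
  have hwmem : w ∈ Finset.univ.filter fun i => ∀ j, b j ≤ b i := Finset.min'_mem _ _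
  have hwmax : ∀ j, b j ≤ b w := (Finset.mem_filter.mp hwmem).2
  by_cases hS : (Finset.univ.filter fun i => r i ≤ b i).Nonempty
  · by_cases hwS : r w ≤ b w
    · have hwSmem : w ∈ Finset.univ.filter fun i => r i ≤ b i :=
        Finset.mem_filter.mpr ⟨Finset.mem_univ w, hwS⟩
      have hew : eagerWinner b r hS = w := by
        have hwT : w ∈ ((Finset.univ.filter fun i => r i ≤ b i).filter
            fun i => ∀ k ∈ Finset.univ.filter (fun i => r i ≤ b i), b k ≤ b i) :=
          Finset.mem_filter.mpr ⟨hwSmem, fun k _ => hwmax k⟩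
        have h1 : eagerWinner b r hS ≤ w := Finset.min'_le _ _ hwT
        have hemem := Finset.min'_mem ((Finset.univ.filter fun i => r i ≤ b i).filter
            fun i => ∀ k ∈ Finset.univ.filter (fun i => r i ≤ b i), b k ≤ b i) (by
          obtain ⟨i, hi, hmax⟩ := Finset.exists_max_image _ b hS
          exact ⟨i, Finset.mem_filter.mpr ⟨hi, hmax⟩⟩)
        have hemax : ∀ j, b j ≤ b (eagerWinner b r hS) := by
          intro j
          have h2 := (Finset.mem_filter.mp hemem).2 w hwSmem
          exact le_trans (hwmax j) h2
        have h2 : w ≤ eagerWinner b r hS :=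
          Finset.min'_le _ _ (Finset.mem_filter.mpr ⟨Finset.mem_univ _, hemax⟩)
        exact le_antisymm h1 h2
      rw [eagerRev, dif_pos hS, hew, lazyRev, if_pos hwS, secondMax, ← hw]
      congr 1
      apply le_antisymm
      · apply (Finset.fold_max_le _).mpr
        refine ⟨(Finset.le_fold_max _).mpr (Or.inl le_rfl), fun i hi => ?_⟩
        exact (Finset.le_fold_max _).mpr (Or.inr ⟨i,
          Finset.mem_erase.mpr ⟨(Finset.mem_erase.mp hi).1,
            Finset.mem_univ i⟩, le_rfl⟩)
      · apply (Finset.fold_max_le _).mpr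
        refine ⟨(Finset.le_fold_max _).mpr (Or.inl le_rfl), fun i hi => ?_⟩
        by_cases hiS : r i ≤ b i
        · exact (Finset.le_fold_max _).mpr (Or.inr ⟨i,
            Finset.mem_erase.mpr ⟨(Finset.mem_erase.mp hi).1,
              Finset.mem_filter.mpr ⟨Finset.mem_univ i, hiS⟩⟩, le_rfl⟩)
        · have : b i = 0 := (htrim i).resolve_right hiS
          rw [this]
          exact (Finset.le_fold_max _).mpr (Or.inl le_rfl)
    · have hbw : b w = 0 := (htrim w).resolve_right hwS
      have hall : ∀ j, b j = 0 := fun j => le_antisymm (hbw ▸ hwmax j) (hb j)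
      rw [lazyRev, if_neg hwS, eagerRev, dif_pos hS]
      have hemem := Finset.min'_mem ((Finset.univ.filter fun i => r i ≤ b i).filter
          fun i => ∀ k ∈ Finset.univ.filter (fun i => r i ≤ b i), b k ≤ b i) (by
        obtain ⟨i, hi, hmax⟩ := Finset.exists_max_image _ b hS
        exact ⟨i, Finset.mem_filter.mpr ⟨hi, hmax⟩⟩)
      have heS : r (eagerWinner b r hS) ≤ b (eagerWinner b r hS) :=
        (Finset.mem_filter.mp (Finset.mem_filter.mp hemem).1).2
      have hre : r (eagerWinner b r hS) = 0 :=
        le_antisymm (by rw [← hall (eagerWinner b r hS)]; exact heS) (hr _)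
      rw [hre]
      have hfold : (((Finset.univ.filter fun i => r i ≤ b i).erase
          (eagerWinner b r hS)).fold max 0 b) = 0 := by
        apply le_antisymm
        · exact (Finset.fold_max_le _).mpr ⟨le_rfl, fun i _ => le_of_eq (hall i)⟩
        · exact (Finset.le_fold_max _).mpr (Or.inl le_rfl)
      rw [hfold, max_self]
  · rw [eagerRev, dif_neg hS, lazyRev, if_neg]
    intro h
    exact hS ⟨w, Finset.mem_filter.mpr ⟨Finset.mem_univ w, h⟩⟩
end

section
/- The eager revenue is monotone in the bids: for a fixed reserve vector r, if b' i ≤ b i for every bidder i, then RevE(b', r) ≤ RevE(b, r). -/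
open MeasureTheory Finset
open scoped Classical ENNReal

lemma eagerWinner_spec {n : ℕ} (b r : Fin (n + 1) → ℝ)
    (hS : (Finset.univ.filter fun i => r i ≤ b i).Nonempty) :
    r (eagerWinner b r hS) ≤ b (eagerWinner b r hS) ∧
      ∀ k, r k ≤ b k → b k ≤ b (eagerWinner b r hS) := by
  have h : eagerWinner b r hS ∈ ((Finset.univ.filter fun i => r i ≤ b i).filter
      fun i => ∀ k ∈ Finset.univ.filter (fun i => r i ≤ b i), b k ≤ b i) :=
    Finset.min'_mem _ _
  simp only [Finset.mem_filter, Finset.mem_univ, true_and] at h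
  exact ⟨h.1, h.2⟩

theorem eagerRev_mono_in_bids {n : ℕ} (b b' r : Fin (n + 1) → ℝ)
    (hb' : ∀ i, 0 ≤ b' i) (hb : ∀ i, 0 ≤ b i) (hr : ∀ i, 0 ≤ r i)
    (hle : ∀ i, b' i ≤ b i) :
    eagerRev b' r ≤ eagerRev b r := by
  classical
  unfold eagerRev
  by_cases hS' : (Finset.univ.filter fun i => r i ≤ b' i).Nonempty
  · have hS : (Finset.univ.filter fun i => r i ≤ b i).Nonempty := by
      obtain ⟨i, hi⟩ := hS'
      simp only [Finset.mem_filter, Finset.mem_univ, true_and] at hi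
      exact ⟨i, Finset.mem_filter.mpr ⟨Finset.mem_univ i, hi.trans (hle i)⟩⟩
    rw [dif_pos hS', dif_pos hS]
    set j' := eagerWinner b' r hS' with hj'def
    set j := eagerWinner b r hS with hjdef
    obtain ⟨hj'r, hj'max⟩ := eagerWinner_spec b' r hS'
    obtain ⟨hjr, hjmax⟩ := eagerWinner_spec b r hS
    rw [← hj'def] at hj'r hj'max
    rw [← hjdef] at hjr hjmax
    set M := ((Finset.univ.filter fun i => r i ≤ b i).erase j).fold max 0 b with hM
    have hM0 : (0:ℝ) ≤ M := (Finset.le_fold_max _).mpr (Or.inl le_rfl)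
    have hkM : ∀ k, r k ≤ b k → k ≠ j → b k ≤ M := fun k hk hkj =>
      (Finset.le_fold_max _).mpr (Or.inr ⟨k, Finset.mem_erase.mpr ⟨hkj,
        Finset.mem_filter.mpr ⟨Finset.mem_univ k, hk⟩⟩, le_rfl⟩)
    have hj'S : r j' ≤ b j' := hj'r.trans (hle j')
    apply max_le
    · by_cases hjj : j' = j
      · rw [hjj]; exact le_max_left _ _
      · exact le_max_of_le_right ((hj'r.trans (hle j')).trans (hkM j' hj'S hjj))
    · refine le_max_of_le_right ((Finset.fold_max_le _).mpr ⟨hM0, fun k hk => ?_⟩)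
      obtain ⟨hkj', hkS'⟩ := Finset.mem_erase.mp hk
      simp only [Finset.mem_filter, Finset.mem_univ, true_and] at hkS'
      by_cases hkj : k = j
      · have hjj' : j ≠ j' := fun h => hkj' (hkj.trans h)
        calc b' k ≤ b' j' := hj'max k hkS'
          _ ≤ b j' := hle j'
          _ ≤ M := hkM j' hj'S (fun h => hjj' h.symm)
      · exact (hle k).trans (hkM k (hkS'.trans (hle k)) hkj)
  · rw [dif_neg hS']
    split
    · exact le_max_of_le_left (hr _)
    · exact le_rfl
end

section
/- Optimal lazy reserves occur at observed bids: given a finite nonempty list of bid vectors b₁, …, b_T (each b_t : Fin n → ℝ≥0), the objective r ↦ Σ_{t=1}^T RevL(b_t, r) attains its supremum over all reserve vectors r, and moreover it attains its supremum at some reserve vector r* such that for every bidder i, r*_i belongs to the finite set {b_t^{(1)} : 1 ≤ t ≤ T} ∪ {b_t^{(2)} : 1 ≤ t ≤ T} ∪ {0}, where b_t^{(1)} and b_t^{(2)} are the highest and second-highest entries of b_t. -/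
open MeasureTheory Finset
open scoped Classical ENNReal

noncomputable def Gl {n : ℕ} (l : List (Fin (n + 1) → ℝ)) (i : Fin (n + 1)) (x : ℝ) : ℝ :=
  ((l.filter fun b => lazyWinner b = i).map fun b => lazyRev b (fun _ => x)).sum

lemma sum_eq_Gl {n : ℕ} (l : List (Fin (n + 1) → ℝ)) (r : Fin (n + 1) → ℝ) :
    (l.map fun b => lazyRev b r).sum = ∑ i : Fin (n + 1), Gl l i (r i) := by
  induction l with
  | nil => simp [Gl]
  | cons b l ih =>
    have hstep : ∀ i : Fin (n+1), Gl (b :: l) i (r i)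
        = Gl l i (r i) + (if lazyWinner b = i then lazyRev b (fun _ => r i) else 0) := by
      intro i
      simp only [Gl, List.filter_cons]
      split_ifs with h h2 h3 <;> simp_all <;> ring
    have hb : lazyRev b (fun _ => r (lazyWinner b)) = lazyRev b r := rfl
    simp only [List.map_cons, List.sum_cons, ih, hstep, Finset.sum_add_distrib,
      Finset.sum_ite_eq, Finset.mem_univ, if_true, hb]
    ring

lemma lazyRev_const_nonneg {n : ℕ} (b : Fin (n + 1) → ℝ) (c : ℝ) (hc : 0 ≤ c) :
    0 ≤ lazyRev b (fun _ => c) := by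
  unfold lazyRev
  split_ifs
  · exact le_trans hc (le_max_left _ _)
  · exact le_rfl

lemma exists_cand {n : ℕ} (l : List (Fin (n + 1) → ℝ)) (hnn : ∀ b ∈ l, ∀ j, 0 ≤ b j)
    (i : Fin (n + 1)) (x : ℝ) (hx : 0 ≤ x) :
    ∃ c, 0 ≤ c ∧ (c = 0 ∨ ∃ b ∈ l, c = b (lazyWinner b)) ∧ Gl l i x ≤ Gl l i c := by
  set S : Finset (Fin (n+1) → ℝ) := l.toFinset.filter (fun b => x ≤ b (lazyWinner b)) with hS
  by_cases hSne : S.Nonempty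
  · set T := S.image (fun b => b (lazyWinner b)) with hT
    have hTne : T.Nonempty := hSne.image _
    refine ⟨T.min' hTne, ?_, ?_, ?_⟩
    · obtain ⟨b0, hb0, heq⟩ := Finset.mem_image.mp (T.min'_mem hTne)
      have := (Finset.mem_filter.mp hb0).2
      linarith [hx, heq ▸ this]
    · right
      obtain ⟨b0, hb0, heq⟩ := Finset.mem_image.mp (T.min'_mem hTne)
      exact ⟨b0, List.mem_toFinset.mp (Finset.mem_filter.mp hb0).1, heq.symm⟩
    · apply List.sum_le_sum
      intro b hb
      have hbl : b ∈ l := List.mem_of_mem_filter hb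
      by_cases hacc : x ≤ b (lazyWinner b)
      · have hbS : b ∈ S := Finset.mem_filter.mpr ⟨List.mem_toFinset.mpr hbl, hacc⟩
        have hcle : T.min' hTne ≤ b (lazyWinner b) :=
          Finset.min'_le _ _ (Finset.mem_image_of_mem _ hbS)
        have hxc : x ≤ T.min' hTne := by
          obtain ⟨b0, hb0, heq⟩ := Finset.mem_image.mp (T.min'_mem hTne)
          exact heq ▸ (Finset.mem_filter.mp hb0).2
        simp only [lazyRev, if_pos hacc, if_pos hcle]
        exact max_le_max hxc le_rfl
      · have h0 : lazyRev b (fun _ => x) = 0 := by simp [lazyRev, hacc]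
        rw [h0]
        apply lazyRev_const_nonneg
        obtain ⟨b0, hb0, heq⟩ := Finset.mem_image.mp (T.min'_mem hTne)
        exact le_trans hx (heq ▸ (Finset.mem_filter.mp hb0).2)
  · refine ⟨0, le_rfl, Or.inl rfl, ?_⟩
    apply List.sum_le_sum
    intro b hb
    have hbl : b ∈ l := List.mem_of_mem_filter hb
    have hacc : ¬ x ≤ b (lazyWinner b) := by
      intro h
      exact hSne ⟨b, Finset.mem_filter.mpr ⟨List.mem_toFinset.mpr hbl, h⟩⟩
    have h0 : lazyRev b (fun _ => x) = 0 := by simp [lazyRev, hacc]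
    rw [h0]
    exact lazyRev_const_nonneg b 0 le_rfl


theorem optimal_lazy_reserves_at_observed_bids {n : ℕ}
    (bs : List (Fin (n + 1) → ℝ)) (hne : bs ≠ [])
    (hnn : ∀ b ∈ bs, ∀ i, 0 ≤ b i) :
    ∃ rstar : Fin (n + 1) → ℝ, (∀ i, 0 ≤ rstar i) ∧
      (∀ r : Fin (n + 1) → ℝ, (∀ i, 0 ≤ r i) →
        (bs.map fun b => lazyRev b r).sum ≤ (bs.map fun b => lazyRev b rstar).sum) ∧
      (∀ i, rstar i = 0 ∨
        ∃ b ∈ bs, rstar i = b (lazyWinner b) ∨ rstar i = secondMax b) := by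
  set C : Finset ℝ :=
    (insert (0:ℝ) (bs.toFinset.image fun b => b (lazyWinner b))).filter (fun c => 0 ≤ c) with hC
  have h0C : (0:ℝ) ∈ C := Finset.mem_filter.mpr ⟨Finset.mem_insert_self _ _, le_rfl⟩
  have hChoice : ∀ i : Fin (n+1), ∃ c ∈ C, ∀ d ∈ C, Gl bs i d ≤ Gl bs i c := by
    intro i
    obtain ⟨c, hc, hmax⟩ := Finset.exists_max_image C (Gl bs i) ⟨0, h0C⟩
    exact ⟨c, hc, hmax⟩
  choose c hcC hcmax using hChoice
  refine ⟨c, fun i => (Finset.mem_filter.mp (hcC i)).2, ?_, ?_⟩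
  · intro r hr
    rw [sum_eq_Gl, sum_eq_Gl]
    apply Finset.sum_le_sum
    intro i _
    obtain ⟨d, hd0, hdmem, hle⟩ := exists_cand bs hnn i (r i) (hr i)
    have hdC : d ∈ C := by
      rcases hdmem with h | ⟨b, hb, heq⟩
      · exact h ▸ h0C
      · exact Finset.mem_filter.mpr
          ⟨Finset.mem_insert_of_mem (Finset.mem_image.mpr ⟨b, List.mem_toFinset.mpr hb, heq.symm⟩),
           hd0⟩
    exact le_trans hle (hcmax i d hdC)
  · intro i
    have := (Finset.mem_filter.mp (hcC i)).1
    rcases Finset.mem_insert.mp this with h | h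
    · exact Or.inl h
    · obtain ⟨b, hb, heq⟩ := Finset.mem_image.mp h
      exact Or.inr ⟨b, List.mem_toFinset.mp hb, Or.inl heq.symm⟩
end
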